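/- arXiv:1308.5824 — 4 statements merged into one kernel-verified Lean document; each statement's English description precedes it below -/
import Mathlib

section
/- A bilinear map Φ : ℝ^d × (ℝ^d ⊗ (ℝ^d)^*) → ℝ^d (equivalently Φ : ℝ^d × M_d(ℝ) → ℝ^d, linear in each argument) satisfying Φ(AV, AMA⁻¹) = A Φ(V,M) for all A ∈ GL(d,ℝ), provided d ≥ 2, is of the form Φ(V,M) = λ·MV + μ·(tr M)·V for some real scalars λ, μ. -/
/-!
Conjugating by a diagonal matrix `diag t` multiplies the coefficient `Φ(e_i, E_jk)_l` by
`t_i t_j / (t_k t_l)`, so it vanishes unless `{i, j} = {k, l}`. Conjugating by permutation matrices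
shows that the surviving coefficients only depend on which indices coincide: `Φ(e_i, E_ji)_j = λ`
and `Φ(e_i, E_jj)_i = μ` for `i ≠ j`, and `Φ(e_i, E_ii)_i = ν`. Conjugating `E_bb` by the
transvection `1 + E_ab` gives `ν = λ + μ`, which is the coefficient pattern of `λ M V + μ (tr M) V`.
-/

open Matrix

theorem Equiv.Perm.exists_apply_eq_and_apply_eq {ι : Type*} {a b c d : ι} (hab : a ≠ b)
    (hcd : c ≠ d) : ∃ σ : Equiv.Perm ι, σ a = c ∧ σ b = d := by
  obtain ⟨σ, hσ⟩ := Equiv.Perm.exists_extending_pair ![a, b] ![c, d]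
    (by simp [hab]) (by simp [hcd])
  exact ⟨σ, hσ 0, hσ 1⟩

section

variable {ι K : Type*} [Fintype ι] [DecidableEq ι] [Field K]

def IsGLEquivariant (Φ : (ι → K) →ₗ[K] Matrix ι ι K →ₗ[K] (ι → K)) : Prop :=
  ∀ (A : GL ι K) (v : ι → K) (M : Matrix ι ι K),
    Φ ((A : Matrix ι ι K).mulVec v) ((A : Matrix ι ι K) * M * ((A⁻¹ : GL ι K) : Matrix ι ι K))
      = (A : Matrix ι ι K).mulVec (Φ v M)

namespace IsGLEquivariant

variable {Φ : (ι → K) →ₗ[K] Matrix ι ι K →ₗ[K] (ι → K)}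

theorem apply_mul_mul_eq (hΦ : IsGLEquivariant Φ) {A B : Matrix ι ι K} (hAB : A * B = 1)
    (v : ι → K) (M : Matrix ι ι K) : Φ (A *ᵥ v) (A * M * B) = A *ᵥ Φ v M :=
  hΦ ⟨A, B, hAB, mul_eq_one_comm.mp hAB⟩ v M

theorem mul_apply_single_eq (hΦ : IsGLEquivariant Φ) {t : ι → K} (ht : ∀ m, t m ≠ 0)
    (i j k l : ι) :
    t i * t j * Φ (Pi.single i 1) (single j k 1) l
      = t k * t l * Φ (Pi.single i 1) (single j k 1) l := by
  have hconj : diagonal t * single j k 1 * diagonal t⁻¹ = (t j * (t k)⁻¹) • single j k 1 := by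
    ext x y
    rw [mul_diagonal, diagonal_mul, Matrix.smul_apply, single_apply]
    split_ifs with h
    · obtain ⟨rfl, rfl⟩ := h
      simp
    · simp
  have hinv : diagonal t * diagonal t⁻¹ = 1 := by
    rw [diagonal_mul_diagonal, ← diagonal_one]
    exact congrArg diagonal (funext fun m => mul_inv_cancel₀ (ht m))
  have hvec : diagonal t *ᵥ Pi.single i 1 = t i • Pi.single i 1 := by
    ext m
    by_cases hm : m = i <;> simp [hm]
  have h := congrFun (hΦ.apply_mul_mul_eq hinv (Pi.single i 1) (single j k 1)) l
  rw [hconj, hvec, map_smul, map_smul, LinearMap.smul_apply, mulVec_diagonal] at h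
  simp only [Pi.smul_apply, smul_eq_mul] at h
  field_simp [ht k] at h
  linear_combination h

theorem apply_single_eq_zero [CharZero K] (hΦ : IsGLEquivariant Φ) {i j k l : ι}
    (h₁ : ¬(k = i ∧ l = j)) (h₂ : ¬(j = k ∧ l = i)) :
    Φ (Pi.single i 1) (single j k 1) l = 0 := by
  by_contra hF
  -- the multiplicities of `p` in `{i, j}` and in `{k, l}` agree
  have weight (p : ι) : (if i = p then 1 else 0) + (if j = p then 1 else 0)
      = (if k = p then 1 else 0) + (if l = p then 1 else 0) := by
    have h := mul_right_cancel₀ hF <| hΦ.mul_apply_single_eq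
      (t := fun m => (2 : K) ^ (if m = p then 1 else 0)) (fun _ => pow_ne_zero _ two_ne_zero)
      i j k l
    simp only [← pow_add] at h
    exact Nat.pow_right_injective le_rfl (by exact_mod_cast h)
  have hk := weight k
  have hl := weight l
  grind

theorem apply_single_perm (hΦ : IsGLEquivariant Φ) (σ : Equiv.Perm ι) (i j k l : ι) :
    Φ (Pi.single (σ i) 1) (single (σ j) (σ k) 1) (σ l) = Φ (Pi.single i 1) (single j k 1) l := by
  have hinv : σ⁻¹.permMatrix K * σ.permMatrix K = 1 := by
    rw [← permMatrix_mul, mul_inv_cancel, permMatrix_one]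
  have hconj : σ⁻¹.permMatrix K * single j k 1 * σ.permMatrix K
      = single (σ j) (σ k) 1 := by
    ext x y
    simp [PEquiv.toMatrix_toPEquiv_mul, PEquiv.mul_toMatrix_toPEquiv, single_apply,
      Equiv.eq_symm_apply]
  have h := congrFun (hΦ.apply_mul_mul_eq hinv (Pi.single i 1) (single j k 1)) (σ l)
  rw [hconj, permMatrix_mulVec, permMatrix_mulVec] at h
  have hsingle : Pi.single i (1 : K) ∘ ⇑σ⁻¹ = Pi.single (σ i) 1 := by
    ext m
    simp [Pi.single_apply, Equiv.symm_apply_eq]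
  rw [hsingle] at h
  simpa using h

theorem apply_single_shear [CharZero K] (hΦ : IsGLEquivariant Φ) {a b : ι} (hab : a ≠ b) :
    Φ (Pi.single b 1) (single b b 1) b
      = Φ (Pi.single b 1) (single a b 1) a + Φ (Pi.single a 1) (single b b 1) a := by
  have hSS : single a b (1 : K) * single a b 1 = 0 := single_mul_single_of_ne (h := hab.symm) ..
  have hbS : single b b (1 : K) * single a b 1 = 0 := single_mul_single_of_ne (h := hab.symm) ..
  have hinv : (1 + single a b (1 : K)) * (1 - single a b 1) = 1 := by
    simp [add_mul, mul_sub, hSS]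
  have hconj : (1 + single a b (1 : K)) * single b b 1 * (1 - single a b 1)
      = single b b 1 + single a b 1 := by
    simp [add_mul, mul_sub, hSS, hbS]
  have hvec : (1 + single a b (1 : K)) *ᵥ Pi.single b 1 = Pi.single b 1 + Pi.single a 1 := by
    rw [add_mulVec, one_mulVec, single_mulVec_eq, Pi.single_eq_same, mul_one, one_smul]
  have h := congrFun (hΦ.apply_mul_mul_eq hinv (Pi.single b 1) (single b b 1)) a
  rw [hconj, hvec] at h
  have h₀ : Φ (Pi.single a 1) (single a b 1) a = 0 :=
    hΦ.apply_single_eq_zero (fun h => hab h.1.symm) (fun h => hab h.1)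
  simp only [map_add, LinearMap.add_apply, Pi.add_apply, add_mulVec, one_mulVec,
    single_mulVec_eq, one_mul, Pi.smul_apply, Pi.single_eq_same, smul_eq_mul, mul_one] at h
  linear_combination h₀ - h

theorem apply_single_self [CharZero K] (hΦ : IsGLEquivariant Φ) {a b : ι} (hab : a ≠ b)
    (i : ι) :
    Φ (Pi.single i 1) (single i i 1) i
      = Φ (Pi.single b 1) (single a b 1) a + Φ (Pi.single a 1) (single b b 1) a := by
  have h := hΦ.apply_single_perm (Equiv.swap b i) b b b b
  rw [Equiv.swap_apply_left] at h
  rw [h, hΦ.apply_single_shear hab]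

theorem apply_single_of_ne_left (hΦ : IsGLEquivariant Φ) {a b i j : ι} (hab : a ≠ b)
    (hij : i ≠ j) :
    Φ (Pi.single i 1) (single j i 1) j = Φ (Pi.single b 1) (single a b 1) a := by
  obtain ⟨σ, rfl, rfl⟩ := Equiv.Perm.exists_apply_eq_and_apply_eq hab hij.symm
  exact hΦ.apply_single_perm σ b a b a

theorem apply_single_of_ne_right (hΦ : IsGLEquivariant Φ) {a b i j : ι} (hab : a ≠ b)
    (hij : i ≠ j) :
    Φ (Pi.single i 1) (single j j 1) i = Φ (Pi.single a 1) (single b b 1) a := by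
  obtain ⟨σ, rfl, rfl⟩ := Equiv.Perm.exists_apply_eq_and_apply_eq hab hij
  exact hΦ.apply_single_perm σ a b b a

theorem apply_single_apply [CharZero K] (hΦ : IsGLEquivariant Φ) {a b : ι} (hab : a ≠ b)
    (i j k l : ι) :
    Φ (Pi.single i 1) (single j k 1) l
      = (if k = i ∧ l = j then Φ (Pi.single b 1) (single a b 1) a else 0)
        + (if j = k ∧ l = i then Φ (Pi.single a 1) (single b b 1) a else 0) := by
  by_cases h₁ : k = i ∧ l = j <;> by_cases h₂ : j = k ∧ l = i
  · obtain ⟨rfl, rfl⟩ := h₁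
    obtain ⟨rfl, -⟩ := h₂
    simp [hΦ.apply_single_self hab]
  · obtain ⟨rfl, rfl⟩ := h₁
    rw [if_pos ⟨rfl, rfl⟩, if_neg h₂, add_zero]
    exact hΦ.apply_single_of_ne_left hab fun h => h₂ ⟨h.symm, h.symm⟩
  · obtain ⟨rfl, rfl⟩ := h₂
    rw [if_neg h₁, if_pos ⟨rfl, rfl⟩, zero_add]
    exact hΦ.apply_single_of_ne_right hab fun h => h₁ ⟨h.symm, h⟩
  · simp [h₁, h₂, hΦ.apply_single_eq_zero h₁ h₂]

theorem exists_eq_smul_mulVec_add_trace_smul [CharZero K] [Nontrivial ι]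
    (hΦ : IsGLEquivariant Φ) :
    ∃ lam mu : K, ∀ (v : ι → K) (M : Matrix ι ι K),
      Φ v M = lam • M *ᵥ v + (mu * M.trace) • v := by
  obtain ⟨a, b, hab⟩ := exists_pair_ne ι
  have hbasis := hΦ.apply_single_apply hab
  generalize Φ (Pi.single b 1) (single a b 1) a = lam at hbasis
  generalize Φ (Pi.single a 1) (single b b 1) a = mu at hbasis
  have h : Φ = lam • (mulVecBilin K K).flip
      + mu • (LinearMap.lsmul K (ι → K)).flip.compl₂ (traceLinearMap ι K K) := by
    refine LinearMap.ext_basis (Pi.basisFun K ι) (stdBasis K ι ι) fun i ⟨j, k⟩ => ?_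
    ext l
    rw [Pi.basisFun_apply, stdBasis_eq_single, hbasis]
    by_cases hjk : j = k
    · subst hjk
      simp [Pi.single_apply, single_apply, and_comm, eq_comm]
    · simp [single_apply, hjk, trace_single_eq_of_ne, and_comm, eq_comm]
  exact ⟨lam, mu, fun v M => by simpa [mul_smul] using congr($h v M)⟩

end IsGLEquivariant

end

/-- A bilinear map `Φ : ℝ^d × M_d(ℝ) → ℝ^d` which is `GL(d,ℝ)`-equivariant
(`Φ(AV, A M A⁻¹) = A Φ(V, M)`), with `d ≥ 2`, is of the form
`Φ(V,M) = λ • M V + μ (tr M) • V`. -/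
theorem equivariant_bilinear_vector_matrix (d : ℕ) (hd : 2 ≤ d)
    (Φ : (Fin d → ℝ) →ₗ[ℝ] Matrix (Fin d) (Fin d) ℝ →ₗ[ℝ] (Fin d → ℝ))
    (hΦ : ∀ (A : GL (Fin d) ℝ) (v : Fin d → ℝ) (M : Matrix (Fin d) (Fin d) ℝ),
      Φ ((A : Matrix (Fin d) (Fin d) ℝ).mulVec v)
          ((A : Matrix (Fin d) (Fin d) ℝ) * M * ((A⁻¹ : GL (Fin d) ℝ) : Matrix (Fin d) (Fin d) ℝ))
        = (A : Matrix (Fin d) (Fin d) ℝ).mulVec (Φ v M)) :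
    ∃ lam mu : ℝ, ∀ (v : Fin d → ℝ) (M : Matrix (Fin d) (Fin d) ℝ),
      Φ v M = lam • M.mulVec v + (mu * M.trace) • v := by
  have : Nontrivial (Fin d) := Fin.nontrivial_iff_two_le.mpr hd
  exact IsGLEquivariant.exists_eq_smul_mulVec_add_trace_smul hΦ
end

section
/- Every GL(d,ℝ)-equivariant linear map Φ : (ℝ^d)^{⊗n} → (ℝ^d)^{⊗n} is a linear combination of the permutation maps δ(σ) : v₁⊗⋯⊗v_n ↦ v_{σ(1)}⊗⋯⊗v_{σ(n)}, σ ∈ S_n; moreover if d ≥ n the maps {δ(σ) : σ ∈ S_n} are linearly independent. -/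
open Matrix
open scoped TensorProduct

/-!
An operator on `(K^d)^{⊗n}` commuting with the `S_n`-action has permutation-invariant matrix
entries, i.e. it is a symmetric tensor in `End(K^d)^{⊗n}`. By polarization such tensors are
spanned by the powers `A^{⊗n}`, and since no nonzero polynomial vanishes on `GL(d)`, already by
those with `A` invertible. Hence a `GL(d)`-equivariant `Φ` commutes with the whole commutant of
`S_n`, and by Maschke's theorem and the Jacobson density theorem the bicommutant of `S_n` is the
image of the group algebra `K[S_n]`.

For `d ≥ n`, an injection `τ : Fin n → Fin d` makes the tensors `e_{τ(σ 1)} ⊗ ⋯ ⊗ e_{τ(σ n)}`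
distinct basis vectors, so the permutation maps are linearly independent.
-/

open Module MvPolynomial

theorem Representation.exists_eq_sum_smul_of_commute_commutant {k G V : Type*} [Field k]
    [Group G] [Fintype G] [NeZero (Nat.card G : k)] [AddCommGroup V] [Module k V]
    [Module.Finite k V] (ρ : Representation k G V) {Φ : End k V}
    (hΦ : ∀ ψ : End k V, (∀ g, Commute ψ (ρ g)) → Commute Φ ψ) :
    ∃ c : G → k, Φ = ∑ g, c g • ρ g := by
  classical
  let Φ' : End (End (MonoidAlgebra k G) ρ.asModule) ρ.asModule :=
    { toFun := Φ
      map_add' := Φ.map_add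
      map_smul' := fun ψ x => by
        have hψ : ∀ g, Commute (ψ.restrictScalars k : End k V) (ρ g) := fun g =>
          LinearMap.ext fun y => by
            have h := ρ.asModuleEquiv_symm_map_rho g
            exact (congrArg ψ (h y)).trans ((ψ.map_smul _ _).trans (h (ψ y)).symm)
        exact LinearMap.congr_fun (hΦ _ hψ) x }
  let b := Module.finBasis k V
  obtain ⟨r, hr⟩ := jacobson_density Φ' (Finset.univ.image b)
  refine ⟨r.coeff, b.ext fun i => (hr _ (Finset.mem_image_of_mem _ (Finset.mem_univ i))).trans ?_⟩
  show ρ.asAlgebraHom r (b i) = _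
  rw [Representation.asAlgebraHom_def, MonoidAlgebra.lift_apply,
    Finsupp.sum_fintype _ _ fun g => zero_smul k (ρ g)]

theorem MvPolynomial.prod_X_eq_monomial {R α ι : Type*} [CommSemiring R] [Fintype ι]
    (h : ι → α) : ∏ i, X (h i) = monomial (∑ i, Finsupp.single (h i) 1) (1 : R) := by
  rw [monomial_sum_one]
  rfl

section Polarization

variable {K α ι : Type*} [Field K] [Fintype ι]

theorem exists_perm_comp_eq_of_sum_single_eq {h h' : ι → α}
    (hcount : ∑ i, Finsupp.single (h i) 1 = ∑ i, Finsupp.single (h' i) 1) :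
    ∃ σ : Equiv.Perm ι, h' ∘ σ = h := by
  classical
  have hcard : ∀ (h : ι → α) x,
      (∑ i, Finsupp.single (h i) 1 : α →₀ ℕ) x = Fintype.card {i // h i = x} := fun h x => by
    rw [Fintype.card_subtype, Finset.card_filter, Finsupp.finsetSum_apply]
    simp only [Finsupp.single_apply]
  have hfiber : ∀ x, Fintype.card {i // h i = x} = Fintype.card {i // h' i = x} := fun x => by
    rw [← hcard, ← hcard, hcount]
  let e := fun x => Fintype.equivOfCardEq (hfiber x)
  refine ⟨(Equiv.sigmaFiberEquiv h).symm.trans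
    ((Equiv.sigmaCongrRight e).trans (Equiv.sigmaFiberEquiv h')), funext fun i => ?_⟩
  exact (e (h i) ⟨i, rfl⟩).2

theorem mem_span_prod_of_comp_perm_eq [Fintype α] {S : Set (α → K)}
    (hS : ∀ p : MvPolynomial α K, (∀ a ∈ S, eval a p = 0) → p = 0)
    {c : (ι → α) → K} (hc : ∀ (σ : Equiv.Perm ι) h, c (h ∘ σ) = c h) :
    c ∈ Submodule.span K ((fun a h => ∏ i, a (h i)) '' S) := by
  classical
  by_contra hnot
  obtain ⟨φ, hφc, hφS⟩ := Submodule.exists_dual_map_eq_bot_of_notMem hnot inferInstance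
  -- `eval a P = φ (fun h => ∏ i, a (h i))`
  let P : MvPolynomial α K := ∑ h, φ (fun h' => if h = h' then 1 else 0) • ∏ i, X (h i)
  have hP : P = 0 := hS P fun a ha => by
    have hφa : φ (fun h => ∏ i, a (h i)) = 0 := by
      rw [← Submodule.mem_bot K, ← hφS]
      exact Submodule.mem_map_of_mem (Submodule.subset_span ⟨a, ha, rfl⟩)
    rw [LinearMap.pi_apply_eq_sum_univ] at hφa
    simpa [P, mul_comm] using hφa
  let cnt : (ι → α) → α →₀ ℕ := fun h => ∑ i, Finsupp.single (h i) 1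
  have hfac : Function.FactorsThrough c cnt := fun h h' hh => by
    obtain ⟨σ, rfl⟩ := exists_perm_comp_eq_of_sum_single_eq hh
    exact hc σ h'
  let L : MvPolynomial α K →ₗ[K] K :=
    ∑ m ∈ Finset.univ.image cnt, Function.extend cnt c 0 m • lcoeff K m
  have hL : ∀ h, L (∏ i, X (h i)) = c h := fun h => by
    simp only [L, prod_X_eq_monomial, LinearMap.coe_sum, LinearMap.coe_smul, Finset.sum_apply,
      Pi.smul_apply, lcoeff_apply, coeff_monomial, smul_eq_mul, mul_ite, mul_one, mul_zero,
      Finset.sum_ite_eq]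
    rw [if_pos (Finset.mem_image_of_mem cnt (Finset.mem_univ h))]
    exact hfac.extend_apply 0 h
  apply hφc
  calc φ c = L P := by
        simp only [P, map_sum, map_smul, hL, LinearMap.pi_apply_eq_sum_univ φ c, smul_eq_mul,
          mul_comm]
    _ = 0 := by rw [hP, map_zero]

end Polarization

theorem MvPolynomial.eq_zero_of_eval_eq_zero_of_det_ne_zero {K κ : Type*} [Field K] [Infinite K]
    [Fintype κ] [DecidableEq κ] {p : MvPolynomial (κ × κ) K}
    (hp : ∀ a : κ × κ → K, (of fun i j => a (i, j)).det ≠ 0 → eval a p = 0) : p = 0 := by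
  have hdet_mul : (mvPolynomialX κ κ K).det * p = 0 := funext fun a => by
    by_cases ha : (of fun i j => a (i, j)).det = 0
    · simp [eval_det_mvPolynomialX, ha]
    · simp [hp a ha]
  exact (mul_eq_zero.mp hdet_mul).resolve_left (det_mvPolynomialX_ne_zero κ K)

namespace PiTensorProduct

section Perm

variable (R : Type*) [CommSemiring R] (ι M : Type*) [AddCommMonoid M] [Module R M]

noncomputable def permRep : Representation R (Equiv.Perm ι) (⨂[R] _ : ι, M) where
  toFun σ := (reindex R (fun _ => M) σ).toLinearMap
  map_one' := (congrArg LinearEquiv.toLinearMap (reindex_refl ..)).trans rfl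
  map_mul' σ τ := congrArg LinearEquiv.toLinearMap (reindex_trans τ σ).symm

variable {R ι M}

@[simp]
theorem permRep_tprod (σ : Equiv.Perm ι) (v : ι → M) :
    permRep R ι M σ (tprod R v) = tprod R fun i => v (σ.symm i) :=
  reindex_tprod σ v

end Perm

section Basis

variable (K : Type*) [Field K] (ι κ : Type*) [Fintype ι] [Fintype κ]

noncomputable def basisFun : Basis (ι → κ) K (⨂[K] _ : ι, κ → K) :=
  Basis.piTensorProduct fun _ => Pi.basisFun K κ

variable {K ι κ}

theorem basisFun_apply [DecidableEq κ] (f : ι → κ) :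
    basisFun K ι κ f = tprod K fun i => Pi.single (f i) 1 := by
  simp [basisFun]

@[simp]
theorem basisFun_repr_tprod (v : ι → κ → K) (f : ι → κ) :
    (basisFun K ι κ).repr (tprod K v) f = ∏ i, v i (f i) := by
  simp [basisFun]

theorem basisFun_repr_permRep (σ : Equiv.Perm ι) (x : ⨂[K] _ : ι, κ → K) (f : ι → κ) :
    (basisFun K ι κ).repr (permRep K ι (κ → K) σ x) f = (basisFun K ι κ).repr x (f ∘ σ) := by
  induction x using PiTensorProduct.induction_on with
  | smul_tprod c v =>
    simp only [map_smul, permRep_tprod, Finsupp.smul_apply, basisFun_repr_tprod,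
      Function.comp_apply]
    rw [← Equiv.prod_comp σ]
    simp
  | add x y hx hy => simp [hx, hy]

theorem permRep_basisFun [DecidableEq κ] (σ : Equiv.Perm ι) (g : ι → κ) :
    permRep K ι (κ → K) σ (basisFun K ι κ g) = basisFun K ι κ (g ∘ σ.symm) := by
  simp [basisFun_apply]

theorem toMatrix_map_mulVecLin [DecidableEq ι] [DecidableEq κ] (a : Matrix κ κ K) (f g : ι → κ) :
    LinearMap.toMatrix (basisFun K ι κ) (basisFun K ι κ) (map fun _ => a.mulVecLin) f g =
      ∏ i, a (f i) (g i) := by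
  simp [LinearMap.toMatrix_apply, basisFun_apply]

end Basis

section Commutant

variable {K ι κ : Type*} [Field K] [Fintype ι] [Fintype κ] [DecidableEq κ]

theorem mem_span_map_mulVecLin_of_commute_permRep [Infinite K]
    {ψ : End K (⨂[K] _ : ι, κ → K)} (hψ : ∀ σ, Commute ψ (permRep K ι (κ → K) σ)) :
    ψ ∈ Submodule.span K
      (Set.range fun A : GL κ K => map fun _ => (A : Matrix κ κ K).mulVecLin) := by
  classical
  let B := basisFun K ι κ
  let c : (ι → κ × κ) → K := fun h => LinearMap.toMatrix B B ψ (Prod.fst ∘ h) (Prod.snd ∘ h)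
  have hc : ∀ (σ : Equiv.Perm ι) h, c (h ∘ σ) = c h := fun σ h => by
    simp only [c, LinearMap.toMatrix_apply]
    rw [show Prod.snd ∘ h ∘ σ = (Prod.snd ∘ h) ∘ σ.symm.symm from rfl, ← permRep_basisFun,
      ← Module.End.mul_apply, (hψ σ.symm).eq, Module.End.mul_apply, basisFun_repr_permRep]
    simp [B, Function.comp_def]
  have hspan := mem_span_prod_of_comp_perm_eq (S := {a | (of fun i j => a (i, j)).det ≠ 0})
    (fun _ hp => eq_zero_of_eval_eq_zero_of_det_ne_zero hp) hc
  let E : ((ι → κ × κ) → K) →ₗ[K] End K (⨂[K] _ : ι, κ → K) :=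
    (LinearMap.toMatrix B B).symm.toLinearMap ∘ₗ
      { toFun := fun c => of fun f g => c fun i => (f i, g i)
        map_add' := fun _ _ => rfl
        map_smul' := fun _ _ => rfl }
  have hEψ : E c = ψ := (LinearMap.toMatrix B B).symm_apply_eq.mpr (by ext; rfl)
  have hE : ∀ a : κ × κ → K,
      E (fun h => ∏ i, a (h i)) = map fun _ => (of fun i j => a (i, j)).mulVecLin := fun a =>
    (LinearMap.toMatrix B B).symm_apply_eq.mpr (by ext; simp [B, toMatrix_map_mulVecLin]; rfl)
  have hmap := Submodule.mem_map_of_mem (f := E) hspan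
  rw [Submodule.map_span, ← Set.image_comp, hEψ] at hmap
  refine Submodule.span_mono ?_ hmap
  rintro _ ⟨a, ha, rfl⟩
  exact ⟨GeneralLinearGroup.mkOfDetNeZero _ ha, (hE a).symm⟩

theorem exists_eq_sum_smul_permRep_of_commute [CharZero K] [DecidableEq ι]
    {Φ : End K (⨂[K] _ : ι, κ → K)}
    (hΦ : ∀ A : GL κ K, Commute Φ (map fun _ => (A : Matrix κ κ K).mulVecLin)) :
    ∃ c : Equiv.Perm ι → K, Φ = ∑ σ, c σ • permRep K ι (κ → K) σ := by
  have : NeZero (Nat.card (Equiv.Perm ι) : K) := ⟨Nat.cast_ne_zero.mpr Nat.card_pos.ne'⟩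
  have hspan : ∀ ψ ∈ Submodule.span K
      (Set.range fun A : GL κ K => map fun _ => (A : Matrix κ κ K).mulVecLin), Commute Φ ψ := by
    intro ψ hψ
    induction hψ using Submodule.span_induction with
    | mem _ hA => obtain ⟨A, rfl⟩ := hA; exact hΦ A
    | zero => exact Commute.zero_right Φ
    | add _ _ _ _ h₁ h₂ => exact h₁.add_right h₂
    | smul a _ _ h => exact h.smul_right a
  exact (permRep K ι (κ → K)).exists_eq_sum_smul_of_commute_commutant fun ψ hψ =>
    hspan ψ (mem_span_map_mulVecLin_of_commute_permRep hψ)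

theorem linearIndependent_tprod_single_comp_perm (e : ι ↪ κ) :
    LinearIndependent K fun σ : Equiv.Perm ι =>
      tprod K fun i => (Pi.single (e (σ i)) 1 : κ → K) := by
  have := (basisFun K ι κ).linearIndependent.comp (fun σ : Equiv.Perm ι => e ∘ σ)
    fun σ τ h => Equiv.ext fun i => e.injective (congrFun h i)
  simpa [Function.comp_def, basisFun_apply] using this

end Commutant

end PiTensorProduct

/-- Invariant tensor theorem: every `GL(d,ℝ)`-equivariant linear endomorphism of
`(ℝ^d)^{⊗n}` is a linear combination of the permutation maps
`δ(σ) : v₁⊗⋯⊗v_n ↦ v_{σ(1)}⊗⋯⊗v_{σ(n)}`; moreover, if `d ≥ n`, the permutation maps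
are linearly independent (a vanishing linear combination has all coefficients zero). -/
theorem invariant_tensor_theorem (d n : ℕ)
    (Φ : (⨂[ℝ] _ : Fin n, (Fin d → ℝ)) →ₗ[ℝ] ⨂[ℝ] _ : Fin n, (Fin d → ℝ))
    (hΦ : ∀ (A : GL (Fin d) ℝ) (x : ⨂[ℝ] _ : Fin n, (Fin d → ℝ)),
      Φ (PiTensorProduct.map (fun _ => Matrix.mulVecLin (A : Matrix (Fin d) (Fin d) ℝ)) x)
        = PiTensorProduct.map (fun _ => Matrix.mulVecLin (A : Matrix (Fin d) (Fin d) ℝ)) (Φ x)) :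
    (∃ c : Equiv.Perm (Fin n) → ℝ, ∀ v : Fin n → (Fin d → ℝ),
        Φ (PiTensorProduct.tprod ℝ v)
          = ∑ σ : Equiv.Perm (Fin n), c σ • PiTensorProduct.tprod ℝ (fun i => v (σ i))) ∧
      (d ≥ n → ∀ c : Equiv.Perm (Fin n) → ℝ,
        (∀ v : Fin n → (Fin d → ℝ),
          (∑ σ : Equiv.Perm (Fin n), c σ • PiTensorProduct.tprod ℝ (fun i => v (σ i)))
            = (0 : ⨂[ℝ] _ : Fin n, (Fin d → ℝ))) → c = 0) := by
  refine ⟨?_, fun hd c hc => funext fun σ => ?_⟩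
  · obtain ⟨c, rfl⟩ :=
      PiTensorProduct.exists_eq_sum_smul_permRep_of_commute fun A => LinearMap.ext (hΦ A)
    refine ⟨fun σ => c σ⁻¹, fun v => ?_⟩
    simp only [LinearMap.coe_sum, Finset.sum_apply, LinearMap.smul_apply,
      PiTensorProduct.permRep_tprod]
    exact Fintype.sum_equiv (Equiv.inv _) _ _ fun σ => by simp
  · exact Fintype.linearIndependent_iff.mp
      (PiTensorProduct.linearIndependent_tprod_single_comp_perm (K := ℝ) (Fin.castLEEmb hd)) c
      (hc fun i => Pi.single (Fin.castLEEmb hd i) 1) σ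
end

section
/- Let V₀, V₁, …, V_n be vector spaces over a field of characteristic zero. Then the m-th symmetric power of the direct sum decomposes as Sym^m(⊕_{i=0}^n V_i) ≅ ⊕_{κ} ⊗_{j=0}^n Sym^{κ(j)}(V_j), where the sum ranges over all functions κ : {0,…,n} → ℕ with Σ_j κ(j) = m. -/
open scoped TensorProduct

/-- The `k`-th symmetric power of a module, realized as the quotient of the `k`-th
tensor power by the relations identifying a tensor with its permutations. -/
abbrev SymPow (K : Type*) [CommRing K] (M : Type*) [AddCommGroup M] [Module K M]
    (k : ℕ) :=
  (⨂[K] _ : Fin k, M) ⧸ Submodule.span K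
    {x : ⨂[K] _ : Fin k, M | ∃ (v : Fin k → M) (σ : Equiv.Perm (Fin k)),
      x = PiTensorProduct.tprod K v - PiTensorProduct.tprod K (fun i => v (σ i))}

/-!
Every factor is free, so everything is computed on bases. If `b` is a basis of `M` indexed by
`ι`, the classes of `b g₀ ⊗ ⋯ ⊗ b gₖ₋₁` in `Sym^k M` depend only on the multiset of the `gᵢ`,
and sending such a class to its multiset is well defined on `Sym^k M`; so these classes form a
basis indexed by `Sym ι k`. Hence `Sym^m (∏ j, V j)` has a basis indexed by `Sym (Σ j, ι j) m` and the right-hand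
side one indexed by pairs of a composition `κ` of `m` and a multiset of size `κ j` on each `ι j`;
splitting a multiset on `Σ j, ι j` according to the first coordinate matches the two.
-/

namespace Sym

variable {α : Type*} {k : ℕ}

def ofFn (g : Fin k → α) : Sym α k :=
  ⟨List.ofFn g, by simp⟩

theorem ofFn_comp_perm (g : Fin k → α) (σ : Equiv.Perm (Fin k)) : ofFn (g ∘ σ) = ofFn g :=
  Subtype.ext (Quot.sound (σ.ofFn_comp_perm g))

theorem ofFn_surjective : Function.Surjective (ofFn : (Fin k → α) → Sym α k) := by
  rintro ⟨⟨l⟩, hl⟩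
  obtain rfl : l.length = k := hl
  exact ⟨l.get, Subtype.ext (congrArg Multiset.ofList (List.ofFn_get l))⟩

theorem exists_perm_of_ofFn_eq {g h : Fin k → α} (H : ofFn g = ofFn h) :
    ∃ σ : Equiv.Perm (Fin k), g = h ∘ σ := by
  -- Equal multisets have equal sorted tuples, for an arbitrary linear order on `α`.
  let _ : LinearOrder α := IsWellOrder.linearOrder WellOrderingRel
  have hp : (List.ofFn g).Perm (List.ofFn h) := Quotient.exact (congrArg Subtype.val H)
  have hsort : g ∘ Tuple.sort g = h ∘ Tuple.sort h :=
    List.ofFn_injective <| List.Perm.eq_of_sortedLE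
      (Tuple.monotone_sort g).sortedLE_ofFn (Tuple.monotone_sort h).sortedLE_ofFn
      (((Tuple.sort g).ofFn_comp_perm g).trans (hp.trans ((Tuple.sort h).ofFn_comp_perm h).symm))
  refine ⟨(Tuple.sort g).symm.trans (Tuple.sort h), funext fun i => ?_⟩
  simpa using congrFun hsort ((Tuple.sort g).symm i)

end Sym

namespace Finsupp

theorem sum_id_eq_sum_split {η : Type*} [Fintype η] {ιs : η → Type*} (f : (Σ j, ιs j) →₀ ℕ) :
    (f.sum fun _ => id) = ∑ j, (sigmaFinsuppEquivPiFinsupp f j).sum fun _ => id := by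
  rw [sigma_sum]
  refine Finset.sum_subset (Finset.subset_univ _) fun j _ hj => ?_
  rw [mem_splitSupport_iff_nonzero, not_not] at hj
  exact hj ▸ sum_zero_index

end Finsupp

def Equiv.piSubtypeSumEquivSigma {J : Type*} [Fintype J] (A : J → Type*) (w : ∀ j, A j → ℕ)
    (m : ℕ) :
    {g : ∀ j, A j // ∑ j, w j (g j) = m} ≃
      Σ κ : {κ : J → ℕ // ∑ j, κ j = m}, ∀ j, {a : A j // w j a = κ.1 j} :=
  ((Equiv.sigmaFiberEquiv fun (g : ∀ j, A j) j => w j (g j)).symm.subtypeEquiv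
      fun _ => Iff.rfl).trans <|
    (Equiv.subtypeSigmaEquiv _ fun κ : J → ℕ => ∑ j, κ j = m).trans <|
      Equiv.sigmaCongrRight fun κ => (Equiv.subtypeEquivRight fun _ => funext_iff).trans
        (Equiv.subtypePiEquivPi (p := fun j a => w j a = κ.1 j))

namespace Sym

noncomputable def sigmaEquiv {J : Type*} [Fintype J] (ι : J → Type*) (m : ℕ) :
    Sym (Σ j, ι j) m ≃ Σ κ : {κ : J → ℕ // ∑ j, κ j = m}, ∀ j, Sym (ι j) (κ.1 j) := by
  classical
  exact (equivNatSum _ m).trans <|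
    (Finsupp.sigmaFinsuppEquivPiFinsupp.subtypeEquiv fun f => by
        rw [Finsupp.sum_id_eq_sum_split f]).trans <|
      (Equiv.piSubtypeSumEquivSigma _ (fun _ f => f.sum fun _ => id) m).trans <|
        Equiv.sigmaCongrRight fun κ => Equiv.piCongrRight fun j => (equivNatSum _ _).symm

end Sym

open PiTensorProduct

namespace SymPow

variable {R M N ι : Type*} [CommRing R] [AddCommGroup M] [Module R M] [AddCommGroup N]
  [Module R N] {k : ℕ}

def mk (v : Fin k → M) : SymPow R M k :=
  Submodule.Quotient.mk (tprod R v)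

theorem mk_comp_perm (v : Fin k → M) (σ : Equiv.Perm (Fin k)) : mk (R := R) (v ∘ σ) = mk v :=
  (Submodule.Quotient.eq _).mpr <| by
    rw [← neg_sub]
    exact neg_mem (Submodule.subset_span ⟨v, σ, rfl⟩)

def lift (f : MultilinearMap R (fun _ : Fin k => M) N)
    (hf : ∀ (v : Fin k → M) (σ : Equiv.Perm (Fin k)), f (v ∘ σ) = f v) :
    SymPow R M k →ₗ[R] N :=
  Submodule.liftQ _ (PiTensorProduct.lift f) <| (Submodule.span_le).mpr <| by
    rintro _ ⟨v, σ, rfl⟩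
    rw [SetLike.mem_coe, LinearMap.mem_ker, map_sub, PiTensorProduct.lift.tprod,
      PiTensorProduct.lift.tprod]
    exact sub_eq_zero.mpr (hf v σ).symm

@[simp]
theorem lift_mk (f : MultilinearMap R (fun _ : Fin k => M) N) (hf) (v : Fin k → M) :
    lift f hf (mk v) = f v :=
  PiTensorProduct.lift.tprod v

theorem mk_comp_eq_of_ofFn_eq (v : ι → M) {g h : Fin k → ι} (H : Sym.ofFn g = Sym.ofFn h) :
    mk (R := R) (v ∘ g) = mk (v ∘ h) := by
  obtain ⟨σ, rfl⟩ := Sym.exists_perm_of_ofFn_eq H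
  exact mk_comp_perm (v ∘ h) σ

variable (b : Module.Basis ι R M)

noncomputable def coordMultilinear : MultilinearMap R (fun _ : Fin k => M) (Sym ι k →₀ R) :=
  (Finsupp.lmapDomain R R Sym.ofFn ∘ₗ
    (Basis.piTensorProduct fun _ : Fin k => b).repr.toLinearMap).compMultilinearMap (tprod R)

theorem coordMultilinear_basis (g : Fin k → ι) :
    coordMultilinear b (b ∘ g) = Finsupp.single (Sym.ofFn g) 1 := by
  have htprod : tprod R (b ∘ g) = Basis.piTensorProduct (fun _ => b) g :=
    (Basis.piTensorProduct_apply _ g).symm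
  rw [coordMultilinear, LinearMap.compMultilinearMap_apply, htprod, LinearMap.comp_apply,
    LinearEquiv.coe_coe, Module.Basis.repr_self, Finsupp.lmapDomain_apply, Finsupp.mapDomain_single]

theorem coordMultilinear_comp_perm (v : Fin k → M) (σ : Equiv.Perm (Fin k)) :
    coordMultilinear b (v ∘ σ) = coordMultilinear b v := by
  have h : (coordMultilinear b).domDomCongr σ = coordMultilinear b :=
    Module.Basis.ext_multilinear (fun _ => b) fun g => by
      change coordMultilinear b (b ∘ (g ∘ σ)) = coordMultilinear b (b ∘ g)
      rw [coordMultilinear_basis, coordMultilinear_basis, Sym.ofFn_comp_perm]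
  exact DFunLike.congr_fun h v

noncomputable def coordFinsupp : SymPow R M k →ₗ[R] Sym ι k →₀ R :=
  lift (coordMultilinear b) (coordMultilinear_comp_perm b)

theorem coordFinsupp_mk (g : Fin k → ι) :
    coordFinsupp b (mk (b ∘ g)) = Finsupp.single (Sym.ofFn g) 1 := by
  rw [coordFinsupp, lift_mk, coordMultilinear_basis]

noncomputable def basis : Module.Basis (Sym ι k) R (SymPow R M k) :=
  .ofRepr <| .ofLinearMap (coordFinsupp b)
    (Finsupp.linearCombination R fun s => mk (b ∘ Function.surjInv Sym.ofFn_surjective s))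
    (Finsupp.lhom_ext fun _ _ => by
      simp [coordFinsupp_mk, Function.surjInv_eq])
    (Submodule.linearMap_qext _ <| (Basis.piTensorProduct fun _ => b).ext fun g => by
      simp only [LinearMap.comp_apply, Submodule.mkQ_apply, LinearMap.id_apply,
        Basis.piTensorProduct_apply]
      change Finsupp.linearCombination R _ (coordFinsupp b (mk (b ∘ g))) = mk (b ∘ g)
      rw [coordFinsupp_mk, Finsupp.linearCombination_single, one_smul]
      exact mk_comp_eq_of_ofFn_eq b (Function.surjInv_eq _ _))

noncomputable def piEquivDirectSum {J : Type*} [Fintype J] {V : J → Type*}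
    [∀ j, AddCommGroup (V j)] [∀ j, Module R (V j)] {ι : J → Type*}
    (b : ∀ j, Module.Basis (ι j) R (V j)) (m : ℕ) :
    SymPow R (∀ j, V j) m ≃ₗ[R]
      DirectSum {κ : J → ℕ // ∑ j, κ j = m} fun κ => ⨂[R] j, SymPow R (V j) (κ.1 j) :=
  (basis (Pi.basis b)).equiv
    (DFinsupp.basis fun _ => Basis.piTensorProduct fun j => basis (b j)) (Sym.sigmaEquiv ι m)

end SymPow

theorem symPow_directSum_decomposition_general
    (K : Type) [Field K] (n m : ℕ)
    (V : Fin (n + 1) → Type) [∀ i, AddCommGroup (V i)] [∀ i, Module K (V i)] :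
    Nonempty (SymPow K (∀ i, V i) m ≃ₗ[K]
      DirectSum {κ : Fin (n + 1) → ℕ // ∑ j, κ j = m}
        (fun κ => ⨂[K] j : Fin (n + 1), SymPow K (V j) (κ.1 j))) :=
  ⟨SymPow.piEquivDirectSum (fun j => Module.Basis.ofVectorSpace K (V j)) m⟩

/-- Decomposition of the symmetric power of a direct sum: over a field of
characteristic zero, `Sym^m(⊕_{i=0}^n V_i)` is isomorphic to the direct sum over all
compositions `κ : {0,…,n} → ℕ` with `∑ κ j = m` of `⊗_{j=0}^n Sym^{κ(j)}(V_j)`. -/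
theorem symPow_directSum_decomposition
    (K : Type) [Field K] [CharZero K] (n m : ℕ)
    (V : Fin (n + 1) → Type) [∀ i, AddCommGroup (V i)] [∀ i, Module K (V i)] :
    Nonempty (SymPow K (∀ i, V i) m ≃ₗ[K]
      DirectSum {κ : Fin (n + 1) → ℕ // ∑ j, κ j = m}
        (fun κ => ⨂[K] j : Fin (n + 1), SymPow K (V j) (κ.1 j))) :=
  symPow_directSum_decomposition_general K n m V
end

section
/- The aromatic Euler method Φ(f)(x₀) = x₀ + (1 + α·h·div f(x₀))·h·f(x₀) is affine equivariant: for every (A,b) ∈ GL(d) ⋉ ℝ^d, Φ((A,b)·f)(Ax₀+b) = AΦ(f)(x₀) + b. -/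
/-- The divergence of `f : ℝ^d → ℝ^d` at `x`: the trace of the Jacobian. -/
noncomputable def vdiv (d : ℕ) (f : (Fin d → ℝ) → (Fin d → ℝ)) (x : Fin d → ℝ) : ℝ :=
  ∑ i, fderiv ℝ f x (Pi.single i 1) i

lemma sum_single_eq_trace (d : ℕ) (L : (Fin d → ℝ) →L[ℝ] (Fin d → ℝ)) :
    ∑ i, L (Pi.single i 1) i = LinearMap.trace ℝ _ (L : (Fin d → ℝ) →ₗ[ℝ] (Fin d → ℝ)) := by
  rw [LinearMap.trace_eq_matrix_trace ℝ (Pi.basisFun ℝ (Fin d)) L, Matrix.trace]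
  simp [Matrix.diag, LinearMap.toMatrix_apply, Pi.basisFun_apply]

/-- The aromatic Euler method `Φ(f)(x₀) = x₀ + (1 + α h div f(x₀)) h • f(x₀)` is affine
equivariant: for any `(A, b) ∈ GL(d) ⋉ ℝ^d`, applying the method to the transformed
vector field `x ↦ A f(A⁻¹(x − b))` at `A x₀ + b` gives `A Φ(f)(x₀) + b`. -/
theorem aromatic_euler_affine_equivariant (d : ℕ) (α h : ℝ)
    (f : (Fin d → ℝ) → (Fin d → ℝ)) (hf : ContDiff ℝ (⊤ : ℕ∞) f)
    (A : (Fin d → ℝ) ≃ₗ[ℝ] (Fin d → ℝ)) (b x₀ : Fin d → ℝ) :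
    (A x₀ + b) +
        ((1 + α * (h * vdiv d (fun x => A (f (A.symm (x - b)))) (A x₀ + b))) * h) •
          (fun x => A (f (A.symm (x - b)))) (A x₀ + b)
      = A (x₀ + ((1 + α * (h * vdiv d f x₀)) * h) • f x₀) + b := by
  have hfd : Differentiable ℝ f := hf.differentiable (by simp)
  set E := A.toContinuousLinearEquiv with hE
  have hAE : ∀ x, A x = E x := fun _ => rfl
  have hAEs : ∀ x, A.symm x = E.symm x := fun _ => rfl
  have hkey : A.symm (A x₀ + b - b) = x₀ := by simp
  have hg : fderiv ℝ (fun x => A (f (A.symm (x - b)))) (A x₀ + b)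
      = ((E : (Fin d → ℝ) →L[ℝ] (Fin d → ℝ)).comp (fderiv ℝ f x₀)).comp
          (E.symm : (Fin d → ℝ) →L[ℝ] (Fin d → ℝ)) := by
    have h1 : (fun x => A (f (A.symm (x - b)))) = (E : _ → _) ∘ f ∘ (fun x => E.symm (x - b)) := by
      funext x; simp [hAE, hAEs, Function.comp]
    rw [h1]
    have hφ : fderiv ℝ (fun x : Fin d → ℝ => E.symm (x - b)) (A x₀ + b)
        = (E.symm : (Fin d → ℝ) →L[ℝ] (Fin d → ℝ)) := by
      have h2 : (fun x : Fin d → ℝ => E.symm (x - b)) = (E.symm : _ → _) ∘ (fun x => x - b) := rfl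
      rw [h2, fderiv_comp _ (E.symm.differentiableAt) ((differentiable_fun_id.sub_const b) _)]
      rw [E.symm.fderiv, fderiv_sub_const, fderiv_id']
      ext v; simp
    have hφd : DifferentiableAt ℝ (fun x : Fin d → ℝ => E.symm (x - b)) (A x₀ + b) :=
      (E.symm.differentiableAt).comp _ ((differentiable_fun_id.sub_const b) _)
    have hφx : E.symm (A x₀ + b - b) = x₀ := by rw [← hAEs]; exact hkey
    rw [fderiv_comp _ (E.differentiableAt) ((hfd _).comp _ hφd)]
    rw [E.fderiv]
    rw [fderiv_comp _ (hfd _) hφd]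
    rw [hφ, hφx]
    ext v; simp
  have hdiv : vdiv d (fun x => A (f (A.symm (x - b)))) (A x₀ + b) = vdiv d f x₀ := by
    unfold vdiv
    rw [hg]
    rw [sum_single_eq_trace, sum_single_eq_trace]
    have : ((((E : (Fin d → ℝ) →L[ℝ] (Fin d → ℝ)).comp (fderiv ℝ f x₀)).comp
        (E.symm : (Fin d → ℝ) →L[ℝ] (Fin d → ℝ))) : (Fin d → ℝ) →ₗ[ℝ] (Fin d → ℝ))
        = (A.conj (fderiv ℝ f x₀ : (Fin d → ℝ) →ₗ[ℝ] (Fin d → ℝ))) := by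
      ext v
      simp [LinearEquiv.conj_apply, hAE, hAEs]
    rw [this, LinearMap.trace_conj']
  rw [hdiv]
  have hfx : (fun x => A (f (A.symm (x - b)))) (A x₀ + b) = A (f x₀) := by
    simp [hkey]
  rw [hfx, map_add, map_smul]
  abel
end
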